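/- Let (A'',m) be a central multiarrangement in K^{ℓ−1} with coordinate ring S', and let η̄ be a regular 1-form on K^{ℓ−1}. If ω ∈ Ω^p(A'',m) is a cocycle of the complex (Ω^*(A'',m), ∧η̄), i.e. η̄ ∧ ω = 0, then for every θ̄ ∈ D(A'',m) one has ⟨θ̄, η̄⟩·ω = η̄ ∧ ⟨θ̄, ω⟩, so that ⟨θ̄, η̄⟩·ω is a coboundary. Consequently the ideal I(η̄) = { ⟨θ̄, η̄⟩ : θ̄ ∈ D(A'',m) } annihilates the cohomology group H^p(Ω^*(A'',m), ∧η̄) for every p. -/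

import Mathlib

open MvPolynomial

noncomputable section

/-- The coordinate ring `K[x_1,…,x_n]`. -/
abbrev PolyR (K : Type) [Field K] (n : ℕ) := MvPolynomial (Fin n) K

/-- The field of rational functions on `K^n`. -/
abbrev Frac (K : Type) [Field K] (n : ℕ) := FractionRing (PolyR K n)

/-- Differential `p`-forms with rational-function coefficients on `K^n`:
a form is determined by its coefficient on `dx_{i_1} ∧ ⋯ ∧ dx_{i_p}` for each
`p`-element subset `{i_1 < ⋯ < i_p}` of the indices. -/
abbrev Form (K : Type) [Field K] (n p : ℕ) := {s : Finset (Fin n) // s.card = p} → Frac K n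

variable (K : Type) [Field K] (n : ℕ)

/-- The linear polynomial `Σ aᵢ xᵢ` attached to a covector `a`. -/
def toPoly (a : Fin n → K) : PolyR K n := ∑ i, C (a i) * X i

/-- algebra map into the fraction field -/
def algF : PolyR K n →+* Frac K n := algebraMap _ _

/-- Wedge product with a 1-form `η = Σ ηᵢ dxᵢ` (as an `F`-linear map on `p`-forms). -/
def wedgeF (η : Fin n → Frac K n) (p : ℕ) : Form K n p →ₗ[Frac K n] Form K n (p+1) where
  toFun ω s := ∑ i ∈ s.1.attach,
    ((-1 : Frac K n) ^ ((s.1.filter (fun j => j < i.1)).card)) * η i.1 *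
      ω ⟨s.1.erase i.1, by simp [Finset.card_erase_of_mem i.2, s.2]⟩
  map_add' x y := by
    funext s
    simp [Finset.sum_add_distrib, mul_add]
  map_smul' c x := by
    funext s
    simp only [Pi.smul_apply, smul_eq_mul, RingHom.id_apply, Finset.mul_sum]
    exact Finset.sum_congr rfl fun i _ => by ring

/-- Wedge product with a 1-form, as an `S`-linear map. -/
def wedgeR (η : Fin n → Frac K n) (p : ℕ) : Form K n p →ₗ[PolyR K n] Form K n (p+1) :=
  (wedgeF K n η p).restrictScalars _

/-- Contraction (interior product) `⟨θ, ω⟩` of a `(p+1)`-form against a derivation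
`θ = Σ θᵢ ∂ᵢ`. -/
def contractF (θ : Fin n → Frac K n) {p : ℕ} (ω : Form K n (p+1)) : Form K n p :=
  fun s => ∑ i ∈ (Finset.univ \ s.1).attach,
    ((-1 : Frac K n) ^ ((s.1.filter (fun j => j < i.1)).card)) * θ i.1 *
      ω ⟨insert i.1 s.1, by
        rcases Finset.mem_sdiff.mp i.2 with ⟨-, h⟩
        simp [Finset.card_insert_of_notMem h, s.2]⟩

/-- The defining polynomial `Q(A,m) = ∏_{H ∈ A} α_H^{m(H)}` of a multiarrangement. -/
def Qp (hyps : Finset (Fin n → K)) (m : (Fin n → K) → ℕ) : PolyR K n :=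
  ∏ a ∈ hyps, toPoly K n a ^ m a

/-- Forms with polynomial (regular) coefficients, as a submodule of all rational forms. -/
def regularForms (p : ℕ) : Submodule (PolyR K n) (Form K n p) :=
  Submodule.pi Set.univ fun _ => Subalgebra.toSubmodule (⊥ : Subalgebra (PolyR K n) (Frac K n))

/-- Scalar multiplication by a fixed rational function, as an `S`-linear map on forms. -/
def scalF (c : Frac K n) (p : ℕ) : Form K n p →ₗ[PolyR K n] Form K n p :=
  (LinearMap.lsmul (Frac K n) (Form K n p) c).restrictScalars _

/-- The 1-form `dα = Σ aᵢ dxᵢ` of a linear form `α = Σ aᵢ xᵢ`. -/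
def dForm (a : Fin n → K) : Fin n → Frac K n := fun i => algF K n (C (a i))

/-- The module `Ω^p(A,m)` of logarithmic differential `p`-forms of the multiarrangement
with hyperplanes (given by defining linear forms) `hyps` and multiplicity `m`:
`Ω^p(A,m) = { ω : Q(A,m)·ω is regular, and (Q(A,m)/α_H^{m(H)})·dα_H ∧ ω is regular ∀ H }`. -/
def logForms (hyps : Finset (Fin n → K)) (m : (Fin n → K) → ℕ) (p : ℕ) :
    Submodule (PolyR K n) (Form K n p) :=
  (regularForms K n p).comap (scalF K n (algF K n (Qp K n hyps m)) p) ⊓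
  ⨅ a ∈ hyps, (regularForms K n (p+1)).comap
    ((scalF K n (algF K n (Qp K n hyps m) / (algF K n (toPoly K n a)) ^ m a) (p+1)).comp
      (wedgeR K n (dForm K n a) p))

/-- The module `D(A,m)` of logarithmic derivations: `θ = Σ θᵢ ∂ᵢ` (encoded by the tuple
`(θ₁,…,θₙ) = (θ(x₁),…,θ(xₙ))`) with `α_H^{m(H)} ∣ θ(α_H)` for all `H`. -/
def logDer (hyps : Finset (Fin n → K)) (m : (Fin n → K) → ℕ) :
    Submodule (PolyR K n) (Fin n → PolyR K n) where
  carrier := {θ | ∀ a ∈ hyps, toPoly K n a ^ m a ∣ ∑ i, C (a i) * θ i}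
  add_mem' := by
    intro x y hx hy a ha
    have : (∑ i, C (a i) * (x + y) i) = (∑ i, C (a i) * x i) + ∑ i, C (a i) * y i := by
      simp [mul_add, Finset.sum_add_distrib]
    rw [this]
    exact dvd_add (hx a ha) (hy a ha)
  zero_mem' := by
    intro a ha
    simp
  smul_mem' := by
    intro c x hx a ha
    have : (∑ i, C (a i) * (c • x) i) = c * ∑ i, C (a i) * x i := by
      simp [Finset.mul_sum, smul_eq_mul]
      exact Finset.sum_congr rfl fun i _ => by ring
    rw [this]
    exact (hx a ha).mul_left c
open Classical in
/-- index of the first nonzero coordinate of a nonzero covector -/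
def leadIdx (a : Fin n → K) (h : a ≠ 0) : Fin n :=
  (Finset.univ.filter fun i => a i ≠ 0).min' (by
    obtain ⟨i, hi⟩ := Function.ne_iff.mp h
    exact ⟨i, Finset.mem_filter.mpr ⟨Finset.mem_univ _, hi⟩⟩)

open Classical in
/-- normalization of a covector: rescale so that the first nonzero coordinate is `1`;
two covectors define the same hyperplane iff they have the same normalization. -/
def normForm (a : Fin n → K) : Fin n → K :=
  if h : a = 0 then 0 else (a (leadIdx K n a h))⁻¹ • a

/-- the covector of the coordinate hyperplane `H₀ = {x_{n+1} = 0}` -/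
def kElast : Fin (n+1) → K := fun i => if i = Fin.last n then 1 else 0

/-- restriction of a linear form on `K^{n+1}` to the hyperplane `H₀ = {x_{n+1} = 0} ≅ K^n` -/
def restrictForm (a : Fin (n+1) → K) : Fin n → K := fun i => a i.castSucc

open Classical in
/-- the hyperplanes of the Ziegler restriction onto `H₀ = {x_{n+1} = 0}`:
the (distinct) hyperplanes `H ∩ H₀`, `H ∈ A ∖ {H₀}` -/
def zieglerHyps (hyps : Finset (Fin (n+1) → K)) : Finset (Fin n → K) :=
  (hyps.erase (kElast K n)).image fun a => normForm K n (restrictForm K n a)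

open Classical in
/-- the Ziegler multiplicity: `m(X) = #{H ∈ A ∖ {H₀} : H ∩ H₀ = X}` -/
def zieglerMult (hyps : Finset (Fin (n+1) → K)) (b : Fin n → K) : ℕ :=
  ((hyps.erase (kElast K n)).filter fun a => normForm K n (restrictForm K n a) = b).card

/-- evaluation at `x_{n+1} = 0`, i.e. restriction of polynomials to `H₀` -/
def ev0 : PolyR K (n+1) →ₐ[K] PolyR K n := aeval (Fin.lastCases 0 X)

/-- a `p`-subset of `Fin n` as a `p`-subset of `Fin (n+1)` -/
def embedSet {p : ℕ} (s : {s : Finset (Fin n) // s.card = p}) :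
    {s : Finset (Fin (n+1)) // s.card = p} :=
  ⟨s.1.image Fin.castSucc, by
    rw [Finset.card_image_of_injective _ (Fin.castSucc_injective n), s.2]⟩

/-- `ResRel f f'` : the rational function `f` on `K^{n+1}` is regular along the generic point
of `H₀ = {x_{n+1} = 0}` and restricts to `f'` there. -/
def ResRel (f : Frac K (n+1)) (f' : Frac K n) : Prop :=
  ∃ g h : PolyR K (n+1), ev0 K n h ≠ 0 ∧ algF K (n+1) h * f = algF K (n+1) g ∧
    f' = algF K n (ev0 K n g) / algF K n (ev0 K n h)

/-- `ResForm ω δ` : writing `ω = σ ∧ (dx_{n+1}/x_{n+1}) + δ₀` with `σ, δ₀` generated by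
`dx_1,…,dx_n`, the residue `δ₀|_{H₀}` equals `δ`; i.e. each coefficient of `ω` on a subset
avoiding the last index restricts to the corresponding coefficient of `δ`. -/
def ResForm {p : ℕ} (ω : Form K (n+1) p) (δ : Form K n p) : Prop :=
  ∀ s : {s : Finset (Fin n) // s.card = p}, ResRel K n (ω (embedSet n s)) (δ s)

/-- `M^p ⊆ Ω^p(A'',m)`: the image of the residue map `res : Ω^p(A) → Ω^p(A'',m)`,
where `(A'',m)` is the Ziegler restriction of the simple arrangement `A` onto `H₀`. -/
def Mres (hyps : Finset (Fin (n+1) → K)) (p : ℕ) : Submodule (PolyR K n) (Form K n p) :=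
  Submodule.span (PolyR K n)
    {δ | δ ∈ logForms K n (zieglerHyps K n hyps) (zieglerMult K n hyps) p ∧
      ∃ ω ∈ logForms K (n+1) hyps (fun _ => 1) p, ResForm K n ω δ}

/-- `x ∈ Frac K n` is a homogeneous rational function of degree `d ∈ ℤ` -/
def IsHomog (d : ℤ) (x : Frac K n) : Prop :=
  x = 0 ∨ ∃ (g h : PolyR K n) (dg dh : ℕ), g.IsHomogeneous dg ∧ h.IsHomogeneous dh ∧
    h ≠ 0 ∧ d = (dg : ℤ) - (dh : ℤ) ∧ x = algF K n g / algF K n h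

/-- a form is homogeneous of degree `d` if all its coefficients are homogeneous rational
functions of degree `d` -/
def IsHomogForm {p : ℕ} (d : ℤ) (ω : Form K n p) : Prop := ∀ s, IsHomog K n d (ω s)

/-- the degree-`d` homogeneous component of a (graded) submodule of forms,
as a `K`-vector space -/
def homogComponent {p : ℕ} (N : Submodule (PolyR K n) (Form K n p)) (d : ℤ) :
    Submodule K (Form K n p) :=
  Submodule.span K {ω | ω ∈ N ∧ IsHomogForm K n d ω}

/-- the coefficient function of the Poincaré series `Poin(N,x) = Σ_d dim_K N_d x^d` -/
def poinFn {p : ℕ} (N : Submodule (PolyR K n) (Form K n p)) : ℤ → ℤ :=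
  fun d => (Module.finrank K ↥(homogComponent K n N d) : ℤ)

/-- dimension of a subquotient `Z/(B ∩ Z)` of `K`-vector spaces -/
def quotDim {W : Type} [AddCommGroup W] [Module K W] (Z B : Submodule K W) : ℕ :=
  Module.finrank K (↥Z ⧸ B.comap Z.subtype)

/-- finite-dimensionality of a subquotient `Z/(B ∩ Z)` of `K`-vector spaces -/
def quotFin {W : Type} [AddCommGroup W] [Module K W] (Z B : Submodule K W) : Prop :=
  Module.Finite K (↥Z ⧸ B.comap Z.subtype)

/-- the degree-`d` homogeneous component of the `p`-graded piece of the quotient `N/M'`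
(for `M' ⊆ N` graded), and its dimension: used for `Poin(C^p, x)` -/
def poinQuotFn {p : ℕ} (N M' : Submodule (PolyR K n) (Form K n p)) : ℤ → ℤ :=
  fun d => (quotDim K (homogComponent K n N d) (homogComponent K n M' d) : ℤ)

/-- `seriesCoeff P N j k` : the coefficient of `t^j x^k` in
`Σ_{p=0}^{N} P_p(x) (t(1-x)-1)^p`, where `P_p(x)` has coefficient function `P p : ℤ → ℤ`. -/
def seriesCoeff (P : ℕ → ℤ → ℤ) (N j : ℕ) : ℤ → ℤ := fun k =>
  ∑ p ∈ Finset.range (N+1), ∑ r ∈ Finset.range (j+1),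
    ((-1 : ℤ) ^ (p - j)) * (p.choose j) * ((-1 : ℤ) ^ r) * (j.choose r) * P p (k - r)

/-- `chiCoeff P N j` : the value at `x = 1` (i.e. `Σ_k` of coefficients, when this series
is a Laurent polynomial in `x`) of the `t^j`-coefficient of `Σ_{p=0}^{N} P_p(x)(t(1-x)-1)^p`;
this is the `t^j`-coefficient of `χ = lim_{x→1} Σ_p Poin(Ω^p,x)(t(1-x)-1)^p`. -/
def chiCoeff (P : ℕ → ℤ → ℤ) (N j : ℕ) : ℤ := ∑ᶠ k : ℤ, seriesCoeff P N j k

/-- the `t^j` coefficient of the characteristic polynomial `χ(A,m,t)` of a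
multiarrangement in `K^n` -/
def chiT (hyps : Finset (Fin n → K)) (m : (Fin n → K) → ℕ) (j : ℕ) : ℤ :=
  chiCoeff (fun p => poinFn K n (logForms K n hyps m p)) n j

/-- the value `χ(A,m,-1)` of the characteristic polynomial of a multiarrangement in `K^n` -/
def chiAtNegOne (hyps : Finset (Fin n → K)) (m : (Fin n → K) → ℕ) : ℤ :=
  ∑ j ∈ Finset.range (n+1), (-1) ^ j * chiT K n hyps m j

/-- Whitney's formula for the characteristic polynomial of a central arrangement:
`χ(A,t) = Σ_{B ⊆ A} (-1)^{|B|} t^{n - rank B} = Σ_{X ∈ L(A)} μ(X) t^{dim X}`. -/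
def charPoly (hyps : Finset (Fin n → K)) : Polynomial ℤ :=
  ∑ B ∈ hyps.powerset, Polynomial.C ((-1 : ℤ) ^ B.card) *
    Polynomial.X ^ (n - Module.finrank K ↥(Submodule.span K (↑B : Set (Fin n → K))))

/-- the reduced characteristic polynomial `χ₀(A,t) = χ(A,t)/(t-1)` -/
def charPoly0 (hyps : Finset (Fin n → K)) : Polynomial ℤ :=
  charPoly K n hyps /ₘ (Polynomial.X - Polynomial.C 1)

/-- `b_i`, defined by `χ₀(A,t) = Σ_{i} (-1)^{n-i} b_{n-i} t^i` for a central arrangement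
in `K^{n+1}` (so `χ₀` has degree `n`) -/
def bval (hyps : Finset (Fin (n+1) → K)) (i : ℕ) : ℤ :=
  (-1) ^ i * (charPoly0 K (n+1) hyps).coeff (n - i)

/-- `σ_i`, defined by `χ(A'',m,t) = Σ_i (-1)^{n-i} σ_{n-i} t^i` for the Ziegler restriction
`(A'',m)` (an `n`-multiarrangement) of a central arrangement in `K^{n+1}` -/
def sval (hyps : Finset (Fin (n+1) → K)) (i : ℕ) : ℤ :=
  (-1) ^ i * chiT K n (zieglerHyps K n hyps) (zieglerMult K n hyps) (n - i)

/-- `projDimLE R M k` : the `R`-module `M` has projective dimension `≤ k`, i.e. it admits a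
projective resolution vanishing in homological degrees `> k`. -/
def projDimLE (R : Type) [CommRing R] (M : Type) [AddCommGroup M] [Module R M] (k : ℕ) : Prop :=
  ∃ P : CategoryTheory.ProjectiveResolution (ModuleCat.of R M),
    ∀ i, k < i → CategoryTheory.Limits.IsZero (P.complex.X i)

/-- A multiarrangement `(A,m)` in `K^n` is tame if `pd Ω^p(A,m) ≤ p` for `p = 0,1,…,n`. -/
def IsTame (hyps : Finset (Fin n → K)) (m : (Fin n → K) → ℕ) : Prop :=
  ∀ p : ℕ, p ≤ n → projDimLE (PolyR K n) ↥(logForms K n hyps m p) p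

/-- cocycles in degree `p` of the complex `(N^•, ∧η)` -/
def Zcoh (η : Fin n → Frac K n) (N : ∀ p : ℕ, Submodule (PolyR K n) (Form K n p)) (p : ℕ) :
    Submodule (PolyR K n) (Form K n p) :=
  N p ⊓ LinearMap.ker (wedgeR K n η p)

/-- coboundaries in degree `p` of the complex `(N^•, ∧η)` -/
def Bcoh (η : Fin n → Frac K n) (N : ∀ p : ℕ, Submodule (PolyR K n) (Form K n p)) :
    ∀ p : ℕ, Submodule (PolyR K n) (Form K n p)
  | 0 => ⊥
  | (p+1) => Submodule.map (wedgeR K n η p) (N p)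

/-- `H^p` of the complex `(N^•, ∧η)` is a finite-dimensional `K`-vector space -/
def HFin (η : Fin n → Frac K n) (N : ∀ p : ℕ, Submodule (PolyR K n) (Form K n p)) (p : ℕ) :
    Prop :=
  quotFin K ((Zcoh K n η N p).restrictScalars K) ((Bcoh K n η N p).restrictScalars K)

/-- the simple (constant `1`) multiplicity -/
def oneMult : (Fin n → K) → ℕ := fun _ => 1

/-- the logarithmic forms `Ω^•(A'',m)` of the Ziegler restriction, as a family -/
def zieglerForms (hyps : Finset (Fin (n+1) → K)) :
    ∀ p : ℕ, Submodule (PolyR K n) (Form K n p) :=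
  fun p => logForms K n (zieglerHyps K n hyps) (zieglerMult K n hyps) p

/-- the Euler derivation `θ_E = Σ xᵢ ∂ᵢ` -/
def eulerDer : Fin n → Frac K n := fun i => algF K n (X i)

/-- the 1-form `dα/α = dx_{n+1}/x_{n+1}` for `α = x_{n+1}` -/
def etaZero : Fin (n+1) → Frac K (n+1) :=
  fun i => if i = Fin.last n then (algF K (n+1) (X (Fin.last n)))⁻¹ else 0

/-- the submodule `Ω^p(A) ∧ (dα/α) ⊆ Ω^{p+1}(A)` for `α = x_{n+1}` -/
def wedgeImage (hyps : Finset (Fin (n+1) → K)) (p : ℕ) :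
    Submodule (PolyR K (n+1)) (Form K (n+1) (p+1)) :=
  Submodule.map (wedgeR K (n+1) (etaZero K n) p) (logForms K (n+1) hyps (oneMult K (n+1)) p)

/-- cocycles of the cokernel complex `(C^• = Ω^•(A'',m)/M^•, ∧η̄)`, as a submodule of
`Ω^p(A'',m)`: forms `ω` with `η̄ ∧ ω ∈ M^{p+1}` -/
def ZcohC (hyps : Finset (Fin (n+1) → K)) (η : Fin n → Frac K n) (p : ℕ) :
    Submodule (PolyR K n) (Form K n p) :=
  zieglerForms K n hyps p ⊓ (Mres K n hyps (p+1)).comap (wedgeR K n η p)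

/-- coboundaries of the cokernel complex `(C^•, ∧η̄)`, as a submodule of `Ω^p(A'',m)`:
`η̄ ∧ Ω^{p-1}(A'',m) + M^p` -/
def BcohC (hyps : Finset (Fin (n+1) → K)) (η : Fin n → Frac K n) (p : ℕ) :
    Submodule (PolyR K n) (Form K n p) :=
  Bcoh K n η (zieglerForms K n hyps) p ⊔ Mres K n hyps p

/-- `H^p` of the cokernel complex `(C^•, ∧η̄)` is finite-dimensional over `K` -/
def HFinC (hyps : Finset (Fin (n+1) → K)) (η : Fin n → Frac K n) (p : ℕ) : Prop :=
  quotFin K ((ZcohC K n hyps η p).restrictScalars K) ((BcohC K n hyps η p).restrictScalars K)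

/-- the restriction `η̄ = η|_{H₀}` of a regular 1-form `η` (given by its polynomial
coefficients) to `H₀ = {x_{n+1} = 0}` -/
def restrict1Form (c : Fin (n+1) → PolyR K (n+1)) : Fin n → Frac K n :=
  fun i => algF K n (ev0 K n (c i.castSucc))

/-- a regular 1-form with polynomial coefficients `c` as a 1-form with rational coefficients -/
def ofPoly1Form (c : Fin n → PolyR K n) : Fin n → Frac K n := fun i => algF K n (c i)

/-- the set `{i₁ < … < i_p} ∪ {n+1}` used to read off the `σ`-part of a form -/
def insertLast {p : ℕ} (s : {s : Finset (Fin n) // s.card = p}) :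
    {s : Finset (Fin (n+1)) // s.card = p+1} :=
  ⟨insert (Fin.last n) (embedSet n s).1, by
    rw [Finset.card_insert_of_notMem, (embedSet n s).2]
    intro h
    obtain ⟨j, -, hj⟩ := Finset.mem_image.mp h
    exact absurd hj (Fin.castSucc_lt_last j).ne⟩

/-- `ResW w δ` : the residue map induced on `Ω^p(A) ∧ (dx_{n+1}/x_{n+1})` sends
`w = δ₀ ∧ (dx_{n+1}/x_{n+1})` to `δ = δ₀|_{H₀}`. -/
def ResW {p : ℕ} (w : Form K (n+1) (p+1)) (δ : Form K n p) : Prop :=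
  ∀ s : {s : Finset (Fin n) // s.card = p},
    ResRel K n (((-1 : Frac K (n+1)) ^ p) * algF K (n+1) (X (Fin.last n)) * w (insertLast n s))
      (δ s)

/-- extension of a linear form on `K^d` to `K^d × K^e` (for product arrangements) -/
def ext1 (d e : ℕ) (a : Fin d → K) : Fin (d+e) → K := Fin.append a 0

/-- extension of a linear form on `K^e` to `K^d × K^e` (for product arrangements) -/
def ext2 (d e : ℕ) (b : Fin e → K) : Fin (d+e) → K := Fin.append 0 b

end

/-! Contraction against a derivation is an antiderivation (Cartan's formula
`η ∧ ⟨θ, ω⟩ = ⟨θ, η⟩ ω - ⟨θ, η ∧ ω⟩`), so for a cocycle `ω` the form `⟨θ, η⟩ ω` equals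
`η ∧ ⟨θ, ω⟩`. It remains that `⟨θ, ω⟩` is again logarithmic: the same formula with `η = dα_H`
writes `dα_H ∧ ⟨θ, ω⟩` as `θ(α_H) ω - ⟨θ, dα_H ∧ ω⟩`, and `α_H^{m(H)}` divides `θ(α_H)`. -/

lemma neg_one_pow_mul_self {R : Type*} [Monoid R] [HasDistribNeg R] (c : ℕ) :
    (-1 : R) ^ c * (-1) ^ c = 1 := by
  rw [← pow_add]
  exact Even.neg_one_pow ⟨c, rfl⟩

noncomputable section

namespace LogForms

open Finset

variable {K : Type} [Field K] {n : ℕ}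

/-- The coefficient of a `p`-form on an arbitrary index set, `0` when it has the wrong size;
it lets the sums defining `∧` and `⟨θ, ·⟩` range over plain finsets. -/
def coeff {p : ℕ} (ω : Form K n p) (t : Finset (Fin n)) : Frac K n :=
  if h : t.card = p then ω ⟨t, h⟩ else 0

lemma coeff_of_card {p : ℕ} (ω : Form K n p) {t : Finset (Fin n)} (h : t.card = p) :
    coeff ω t = ω ⟨t, h⟩ :=
  dif_pos h

lemma contractF_apply (θ : Fin n → Frac K n) {p : ℕ} (ω : Form K n (p+1))
    (s : {s : Finset (Fin n) // s.card = p}) :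
    contractF K n θ ω s = ∑ i ∈ univ \ s.1,
      (-1 : Frac K n) ^ #(s.1.filter (· < i)) * θ i * coeff ω (insert i s.1) := by
  rw [contractF, ← sum_attach (univ \ s.1)]
  refine sum_congr rfl fun i _ => ?_
  have hi : i.1 ∉ s.1 := (mem_sdiff.mp i.2).2
  rw [coeff_of_card _ (by rw [card_insert_of_notMem hi, s.2])]

lemma wedgeF_apply (η : Fin n → Frac K n) {p : ℕ} (ω : Form K n p)
    (s : {s : Finset (Fin n) // s.card = p+1}) :
    wedgeF K n η p ω s = ∑ i ∈ s.1,
      (-1 : Frac K n) ^ #(s.1.filter (· < i)) * η i * coeff ω (s.1.erase i) := by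
  change (∑ i ∈ s.1.attach, _) = _
  rw [← sum_attach s.1]
  refine sum_congr rfl fun i _ => ?_
  rw [coeff_of_card _ (by simp [card_erase_of_mem i.2, s.2])]

lemma contractF_smul (θ : Fin n → Frac K n) {p : ℕ} (c : Frac K n) (ω : Form K n (p+1)) :
    contractF K n θ (c • ω) = c • contractF K n θ ω := by
  funext s
  simp only [contractF, Pi.smul_apply, smul_eq_mul, mul_sum]
  exact sum_congr rfl fun i _ => by ring

lemma contractF_zero (θ : Fin n → Frac K n) {p : ℕ} :
    contractF K n θ (0 : Form K n (p+1)) = 0 := by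
  simpa using contractF_smul θ (0 : Frac K n) (0 : Form K n (p+1))

/-- Moving `dx_i` past `dx_k` in `dx_i ∧ (dx_k ∧ ⋯)` costs one sign. -/
lemma neg_one_pow_filter_insert_mul {s : Finset (Fin n)} {i k : Fin n} (hi : i ∉ s)
    (hk : k ∈ s) :
    (-1 : Frac K n) ^ #(s.filter (· < i)) * (-1) ^ #((insert i s).filter (· < k)) =
      -((-1) ^ #(s.filter (· < k)) * (-1) ^ #((s.erase k).filter (· < i))) := by
  have hik : i ≠ k := fun h => hi (h ▸ hk)
  rw [filter_erase, filter_insert]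
  rcases lt_or_gt_of_ne hik with h | h
  · have hk' : k ∉ s.filter (· < i) := fun hm => (mem_filter.mp hm).2.not_gt h
    rw [if_pos h, card_insert_of_notMem (fun hm => hi (mem_filter.mp hm).1),
      erase_eq_of_notMem hk', pow_succ]
    ring
  · rw [if_neg (asymm h),
      ← card_erase_add_one (mem_filter.mpr ⟨hk, h⟩), pow_succ]
    ring

lemma contractF_wedgeF_apply (θ η : Fin n → Frac K n) {p : ℕ} (ω : Form K n (p+1))
    {s : Finset (Fin n)} (hs : s.card = p+1) :
    contractF K n θ (wedgeF K n η (p+1) ω) ⟨s, hs⟩ =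
      ∑ i ∈ univ \ s, θ i * η i * ω ⟨s, hs⟩ +
      ∑ i ∈ univ \ s, ∑ k ∈ s, (-1 : Frac K n) ^ #(s.filter (· < i)) * θ i *
        ((-1) ^ #((insert i s).filter (· < k)) * η k * coeff ω (insert i (s.erase k))) := by
  rw [contractF_apply, ← sum_add_distrib]
  refine sum_congr rfl fun i hi => ?_
  have hi' : i ∉ s := (mem_sdiff.mp hi).2
  rw [coeff_of_card _ (by rw [card_insert_of_notMem hi', hs]), wedgeF_apply, mul_sum,
    sum_insert hi', erase_insert hi', filter_insert, if_neg (lt_irrefl i), coeff_of_card _ hs]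
  congr 1
  · linear_combination (θ i * η i * ω ⟨s, hs⟩) *
      neg_one_pow_mul_self (R := Frac K n) #(s.filter (· < i))
  · exact sum_congr rfl fun k hk => by rw [erase_insert_of_ne (ne_of_mem_of_not_mem hk hi').symm]

lemma wedgeF_contractF_apply (θ η : Fin n → Frac K n) {p : ℕ} (ω : Form K n (p+1))
    {s : Finset (Fin n)} (hs : s.card = p+1) :
    wedgeF K n η p (contractF K n θ ω) ⟨s, hs⟩ =
      ∑ k ∈ s, θ k * η k * ω ⟨s, hs⟩ +
      ∑ k ∈ s, ∑ i ∈ univ \ s, (-1 : Frac K n) ^ #(s.filter (· < k)) * η k *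
        ((-1) ^ #((s.erase k).filter (· < i)) * θ i * coeff ω (insert i (s.erase k))) := by
  rw [wedgeF_apply, ← sum_add_distrib]
  refine sum_congr rfl fun k hk => ?_
  have hcompl : univ \ s.erase k = insert k (univ \ s) := by
    ext j
    by_cases hj : j = k <;> simp [hj, hk]
  have hk' : k ∉ s.filter (· < k) := fun h => lt_irrefl k (mem_filter.mp h).2
  rw [coeff_of_card _ (by simp [card_erase_of_mem hk, hs]), contractF_apply, hcompl,
    sum_insert (by simp [hk]), insert_erase hk, filter_erase, erase_eq_of_notMem hk',
    coeff_of_card _ hs, mul_add, mul_sum]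
  congr 1
  linear_combination (θ k * η k * ω ⟨s, hs⟩) *
    neg_one_pow_mul_self (R := Frac K n) #(s.filter (· < k))

lemma wedgeF_contractF (θ η : Fin n → Frac K n) (p : ℕ) (ω : Form K n (p+1)) :
    wedgeF K n η p (contractF K n θ ω) =
      (∑ i, θ i * η i) • ω - contractF K n θ (wedgeF K n η (p+1) ω) := by
  funext ⟨s, hs⟩
  rw [Pi.sub_apply, Pi.smul_apply, smul_eq_mul, eq_sub_iff_add_eq, wedgeF_contractF_apply,
    contractF_wedgeF_apply, sum_comm (s := univ \ s), ← sum_mul, ← sum_mul,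
    ← sum_sdiff (subset_univ s) (f := fun i => θ i * η i), add_mul, sum_mul, sum_mul]
  have hcross : ∀ k ∈ s, ∀ i ∈ univ \ s,
      (-1 : Frac K n) ^ #(s.filter (· < i)) * θ i *
        ((-1) ^ #((insert i s).filter (· < k)) * η k * coeff ω (insert i (s.erase k))) =
      -((-1 : Frac K n) ^ #(s.filter (· < k)) * η k *
        ((-1) ^ #((s.erase k).filter (· < i)) * θ i * coeff ω (insert i (s.erase k)))) :=
    fun k hk i hi => by
      linear_combination (θ i * η k * coeff ω (insert i (s.erase k))) *
        neg_one_pow_filter_insert_mul (K := K) (mem_sdiff.mp hi).2 hk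
  rw [sum_congr rfl fun k hk => sum_congr rfl (hcross k hk)]
  simp only [sum_neg_distrib]
  ring

lemma mem_regularForms_iff {p : ℕ} {ω : Form K n p} :
    ω ∈ regularForms K n p ↔ ∀ t, ω t ∈ (⊥ : Subalgebra (PolyR K n) (Frac K n)) := by
  simp [regularForms, Submodule.mem_pi]

lemma contractF_mem_regularForms (θ : Fin n → PolyR K n) {p : ℕ} {ω : Form K n (p+1)}
    (hω : ω ∈ regularForms K n (p+1)) :
    contractF K n (fun i => algF K n (θ i)) ω ∈ regularForms K n p := by
  rw [mem_regularForms_iff] at hω ⊢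
  intro s
  rw [contractF_apply]
  refine Subalgebra.sum_mem _ fun i hi => ?_
  rw [coeff_of_card _ (by rw [card_insert_of_notMem (mem_sdiff.mp hi).2, s.2])]
  exact mul_mem (mul_mem (pow_mem (neg_mem (one_mem _)) _) (Subalgebra.algebraMap_mem _ _))
    (hω _)

lemma mem_logForms_iff {hyps : Finset (Fin n → K)} {m : (Fin n → K) → ℕ} {p : ℕ}
    {ω : Form K n p} :
    ω ∈ logForms K n hyps m p ↔
      algF K n (Qp K n hyps m) • ω ∈ regularForms K n p ∧
      ∀ a ∈ hyps, (algF K n (Qp K n hyps m) / algF K n (toPoly K n a) ^ m a) •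
        wedgeF K n (dForm K n a) p ω ∈ regularForms K n (p+1) := by
  simp only [logForms, Submodule.mem_inf, Submodule.mem_iInf, Submodule.mem_comap]
  rfl

lemma sum_mul_dForm (θ : Fin n → PolyR K n) (a : Fin n → K) :
    ∑ i, algF K n (θ i) * dForm K n a i = algF K n (∑ i, C (a i) * θ i) := by
  simp only [dForm, map_sum, map_mul, mul_comm]

lemma pow_dvd_Qp {hyps : Finset (Fin n → K)} {m : (Fin n → K) → ℕ} {a : Fin n → K}
    (ha : a ∈ hyps) : toPoly K n a ^ m a ∣ Qp K n hyps m :=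
  dvd_prod_of_mem _ ha

theorem contractF_mem_logForms {hyps : Finset (Fin n → K)} {m : (Fin n → K) → ℕ} {p : ℕ}
    {θ : Fin n → PolyR K n} (hθ : θ ∈ logDer K n hyps m) {ω : Form K n (p+1)}
    (hω : ω ∈ logForms K n hyps m (p+1)) :
    contractF K n (fun i => algF K n (θ i)) ω ∈ logForms K n hyps m p := by
  obtain ⟨hQ, hdα⟩ := mem_logForms_iff.mp hω
  refine mem_logForms_iff.mpr ⟨?_, fun a ha => ?_⟩
  · rw [← contractF_smul]
    exact contractF_mem_regularForms θ hQ
  obtain ⟨g, hg⟩ := hθ a ha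
  set α := algF K n (toPoly K n a) ^ m a
  have hQα : α = 0 → algF K n (Qp K n hyps m) = 0 := fun h0 => zero_dvd_iff.mp <| h0 ▸ by
    simpa only [map_pow] using map_dvd (algF K n) (pow_dvd_Qp (m := m) ha)
  have hθα : (algF K n (Qp K n hyps m) / α) • (∑ i, algF K n (θ i) * dForm K n a i) • ω =
      g • algF K n (Qp K n hyps m) • ω := by
    rw [sum_mul_dForm, hg, map_mul, map_pow, smul_smul, ← algebraMap_smul (Frac K n) g,
      smul_smul]
    congr 1
    change _ * (α * _) = algF K n g * _
    rw [← mul_assoc, div_mul_cancel_of_imp hQα, mul_comm]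
  rw [wedgeF_contractF, smul_sub, hθα, ← contractF_smul]
  exact sub_mem (Submodule.smul_mem _ g hQ) (contractF_mem_regularForms θ (hdα a ha))

end LogForms

end

theorem statement9_general (K : Type) [Field K] (n : ℕ)
    (hyps : Finset (Fin n → K))
    (m : (Fin n → K) → ℕ) (f : Fin n → PolyR K n) (p : ℕ)
    (ω : Form K n (p+1)) (hω : ω ∈ logForms K n hyps m (p+1))
    (hcoc : wedgeR K n (ofPoly1Form K n f) (p+1) ω = 0)
    (θ : Fin n → PolyR K n) (hθ : θ ∈ logDer K n hyps m) :
    algF K n (∑ i, θ i * f i) • ω =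
      wedgeR K n (ofPoly1Form K n f) p (contractF K n (fun i => algF K n (θ i)) ω) ∧
    algF K n (∑ i, θ i * f i) • ω ∈
      Submodule.map (wedgeR K n (ofPoly1Form K n f) p) (logForms K n hyps m p) := by
  have hpair : ∑ i, algF K n (θ i) * ofPoly1Form K n f i = algF K n (∑ i, θ i * f i) := by
    simp only [ofPoly1Form, map_sum, map_mul]
  have hcoboundary : algF K n (∑ i, θ i * f i) • ω =
      wedgeR K n (ofPoly1Form K n f) p (contractF K n (fun i => algF K n (θ i)) ω) := by
    have hcocF : wedgeF K n (ofPoly1Form K n f) (p+1) ω = 0 := hcoc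
    rw [wedgeR, LinearMap.restrictScalars_apply, LogForms.wedgeF_contractF, hcocF,
      LogForms.contractF_zero,
      sub_zero, hpair]
  exact ⟨hcoboundary, _, LogForms.contractF_mem_logForms hθ hω, hcoboundary.symm⟩

/-- from the proof of Proposition 3.5. Let `(A'',m)` be a central
multiarrangement in `K^n` and `η̄ = Σ fᵢ dxᵢ` a regular 1-form. If `ω ∈ Ω^{p+1}(A'',m)` is a
cocycle of `(Ω^•(A'',m), ∧η̄)`, i.e. `η̄ ∧ ω = 0`, then for every `θ̄ ∈ D(A'',m)` one has
`⟨θ̄, η̄⟩ · ω = η̄ ∧ ⟨θ̄, ω⟩`, so `⟨θ̄, η̄⟩ · ω` is a coboundary; consequently the ideal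
`I(η̄)` annihilates the cohomology of `(Ω^•(A'',m), ∧η̄)`. -/
theorem statement9 (K : Type) [Field K] (n : ℕ)
    (hyps : Finset (Fin n → K))
    (hne : ∀ a ∈ hyps, a ≠ 0)
    (hdist : ∀ a ∈ hyps, ∀ b ∈ hyps, ∀ c : K, a = c • b → a = b)
    (m : (Fin n → K) → ℕ) (f : Fin n → PolyR K n) (p : ℕ)
    (ω : Form K n (p+1)) (hω : ω ∈ logForms K n hyps m (p+1))
    (hcoc : wedgeR K n (ofPoly1Form K n f) (p+1) ω = 0)
    (θ : Fin n → PolyR K n) (hθ : θ ∈ logDer K n hyps m) :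
    algF K n (∑ i, θ i * f i) • ω =
      wedgeR K n (ofPoly1Form K n f) p (contractF K n (fun i => algF K n (θ i)) ω) ∧
    algF K n (∑ i, θ i * f i) • ω ∈
      Submodule.map (wedgeR K n (ofPoly1Form K n f) p) (logForms K n hyps m p) :=
  statement9_general K n hyps m f p ω hω hcoc θ hθ
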